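/- Let n ≥ 1, let ρ̂ be a density matrix on ℂⁿ and let Π be an orthogonal projection (a Hermitian idempotent n×n matrix). Set ε' := Tr((𝟙 − Π) ρ̂). Then the coherence term c := Π ρ̂ (𝟙 − Π) satisfies ‖c‖_Tr ≤ √(ε'·(1 − ε')). -/

import Mathlib

open scoped ComplexOrder

/-- The square root of a positive semidefinite matrix, as in the older Mathlib's
`Matrix.PosSemidef.sqrt` (removed since). -/
noncomputable def Matrix.PosSemidef.sqrt {n : Type*} {𝕜 : Type*} [Fintype n] [RCLike 𝕜]
    [DecidableEq n] {A : Matrix n n 𝕜} (hA : A.PosSemidef) : Matrix n n 𝕜 :=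
  hA.1.eigenvectorUnitary.1 * Matrix.diagonal ((↑) ∘ (√·) ∘ hA.1.eigenvalues) *
  (star hA.1.eigenvectorUnitary : Matrix n n 𝕜)

/-- The trace norm `‖c‖_Tr = Tr √(c cᴴ)` of a complex square matrix. -/
noncomputable def traceNorm {m : Type*} [Fintype m] [DecidableEq m]
    (c : Matrix m m ℂ) : ℝ :=
  ((Matrix.PosSemidef.sqrt (Matrix.posSemidef_self_mul_conjTranspose c)).trace).re

open Matrix in
private lemma psd_sqrt_conjTranspose {n : Type*} [Fintype n] [DecidableEq n]
    {A : Matrix n n ℂ} (hA : A.PosSemidef) : (hA.sqrt)ᴴ = hA.sqrt := by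
  have hst : star ((RCLike.ofReal : ℝ → ℂ) ∘ (√·) ∘ hA.1.eigenvalues) =
      (RCLike.ofReal : ℝ → ℂ) ∘ (√·) ∘ hA.1.eigenvalues := by
    funext i; simp
  simp only [Matrix.PosSemidef.sqrt, Matrix.conjTranspose_mul, Matrix.diagonal_conjTranspose,
    hst, Matrix.star_eq_conjTranspose, Matrix.conjTranspose_conjTranspose, Matrix.mul_assoc]

private lemma psd_sqrt_mul_self {n : Type*} [Fintype n] [DecidableEq n]
    {A : Matrix n n ℂ} (hA : A.PosSemidef) : hA.sqrt * hA.sqrt = A := by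
  have hUU : (star hA.1.eigenvectorUnitary : Matrix n n ℂ) *
      (hA.1.eigenvectorUnitary : Matrix n n ℂ) = 1 :=
    Unitary.star_mul_self_of_mem hA.1.eigenvectorUnitary.2
  have hD : Matrix.diagonal ((RCLike.ofReal : ℝ → ℂ) ∘ (√·) ∘ hA.1.eigenvalues) *
      Matrix.diagonal ((RCLike.ofReal : ℝ → ℂ) ∘ (√·) ∘ hA.1.eigenvalues) =
      Matrix.diagonal (RCLike.ofReal ∘ hA.1.eigenvalues) := by
    rw [Matrix.diagonal_mul_diagonal]
    congr 1
    funext i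
    simp only [Function.comp_apply]
    rw [← RCLike.ofReal_mul, Real.mul_self_sqrt (hA.eigenvalues_nonneg i)]
  conv_rhs => rw [hA.1.spectral_theorem, Unitary.conjStarAlgAut_apply]
  simp only [Matrix.PosSemidef.sqrt]
  rw [show ∀ a b c d e f : Matrix n n ℂ, a * b * c * (d * e * f) = a * b * (c * d) * e * f from
    fun a b c d e f => by simp only [Matrix.mul_assoc], hUU, Matrix.mul_one, Matrix.mul_assoc _ _ (Matrix.diagonal _), hD]


open Matrix in
private lemma inner_equiv_symm' {n : ℕ} (x y : Fin n → ℂ) :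
    (inner ℂ ((WithLp.equiv 2 _).symm x) ((WithLp.equiv 2 _).symm y) : ℂ) = star x ⬝ᵥ y := by
  rw [dotProduct_comm]; rfl

open Matrix in
private lemma re_dot_le {n : ℕ} (a b : Fin n → ℂ) :
    (star a ⬝ᵥ b).re ≤ Real.sqrt (star a ⬝ᵥ a).re * Real.sqrt (star b ⬝ᵥ b).re := by
  let a' : EuclideanSpace ℂ (Fin n) := (WithLp.equiv 2 _).symm a
  let b' : EuclideanSpace ℂ (Fin n) := (WithLp.equiv 2 _).symm b
  have h1 : (inner ℂ a' b' : ℂ) = star a ⬝ᵥ b := inner_equiv_symm' a b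
  have h2 : (inner ℂ a' a' : ℂ) = star a ⬝ᵥ a := inner_equiv_symm' a a
  have h3 : (inner ℂ b' b' : ℂ) = star b ⬝ᵥ b := inner_equiv_symm' b b
  calc (star a ⬝ᵥ b).re = (inner ℂ a' b' : ℂ).re := by rw [h1]
    _ ≤ ‖(inner ℂ a' b' : ℂ)‖ := Complex.re_le_norm _
    _ ≤ ‖a'‖ * ‖b'‖ := norm_inner_le_norm a' b'
    _ = _ := by rw [norm_eq_sqrt_re_inner (𝕜 := ℂ) a', norm_eq_sqrt_re_inner (𝕜 := ℂ) b', h2, h3]; rfl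

open Matrix in
private lemma sum_dot_eq_trace {n : ℕ} (X : Matrix (Fin n) (Fin n) ℂ)
    (U : Matrix.unitaryGroup (Fin n) ℂ) :
    ∑ i, star (fun j => (U : Matrix (Fin n) (Fin n) ℂ) j i) ⬝ᵥ
      (X *ᵥ fun j => (U : Matrix (Fin n) (Fin n) ℂ) j i) = X.trace := by
  have hUU : (U : Matrix (Fin n) (Fin n) ℂ) * star (U : Matrix (Fin n) (Fin n) ℂ) = 1 :=
    Unitary.mul_star_self_of_mem U.2
  have h : (star (U : Matrix (Fin n) (Fin n) ℂ) * X * (U : Matrix (Fin n) (Fin n) ℂ)).trace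
      = X.trace := by
    rw [Matrix.trace_mul_cycle, hUU, one_mul]
  rw [← h]
  simp only [Matrix.trace, Matrix.diag, Matrix.mul_apply, dotProduct, Matrix.mulVec,
    Matrix.star_apply, dotProduct, Pi.star_apply, Finset.sum_mul, Finset.mul_sum]
  refine Finset.sum_congr rfl fun i _ => ?_
  rw [Finset.sum_comm]
  refine Finset.sum_congr rfl fun j _ => Finset.sum_congr rfl fun k _ => ?_
  ring

open Matrix in
private lemma traceNorm_eq_sum_sqrt {n : ℕ} (c : Matrix (Fin n) (Fin n) ℂ) :
    traceNorm c =
      ∑ i, Real.sqrt ((Matrix.posSemidef_self_mul_conjTranspose c).1.eigenvalues i) := by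
  set hM := Matrix.posSemidef_self_mul_conjTranspose c
  have hUU : star (hM.1.eigenvectorUnitary : Matrix (Fin n) (Fin n) ℂ) *
      (hM.1.eigenvectorUnitary : Matrix (Fin n) (Fin n) ℂ) = 1 :=
    Unitary.star_mul_self_of_mem hM.1.eigenvectorUnitary.2
  have : hM.sqrt.trace = ∑ i, ((Real.sqrt (hM.1.eigenvalues i) : ℝ) : ℂ) := by
    rw [Matrix.PosSemidef.sqrt, Matrix.trace_mul_cycle, hUU, one_mul,
      Matrix.trace_diagonal]
    rfl
  rw [traceNorm, this, Complex.re_sum]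
  simp

open Matrix in
private lemma re_dot_self_nonneg {n : ℕ} (a : Fin n → ℂ) : 0 ≤ (star a ⬝ᵥ a).re :=
  (Complex.le_def.mp (dotProduct_star_self_nonneg a)).1

open Matrix in
private lemma re_dot_self_eq_sum {n : ℕ} (x : Fin n → ℂ) :
    (star x ⬝ᵥ x).re = ∑ j, ‖x j‖ ^ 2 := by
  rw [dotProduct, Complex.re_sum]
  refine Finset.sum_congr rfl fun j _ => ?_
  simp [Complex.sq_norm, Complex.normSq_apply, Complex.mul_re]

/-- For a density matrix `ρ̂` and an orthogonal projection `P`, with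
`ε' := Tr((𝟙 − P) ρ̂)`, the coherence term `c := P ρ̂ (𝟙 − P)` satisfies
`‖c‖_Tr ≤ √(ε'(1 − ε'))`. -/
theorem traceNorm_coherence_le
    (n : ℕ) (hn : 1 ≤ n)
    (ρ : Matrix (Fin n) (Fin n) ℂ) (hρ : ρ.PosSemidef) (hρtr : ρ.trace = 1)
    (P : Matrix (Fin n) (Fin n) ℂ) (hP : P.IsHermitian) (hP2 : P * P = P) :
    traceNorm (P * ρ * (1 - P)) ≤
      Real.sqrt ((Matrix.trace ((1 - P) * ρ)).re * (1 - (Matrix.trace ((1 - P) * ρ)).re)) := by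
  classical
  open Matrix in
  set s : Matrix (Fin n) (Fin n) ℂ := hρ.sqrt with hs
  have hsH : sᴴ = s := psd_sqrt_conjTranspose hρ
  have hss : s * s = ρ := psd_sqrt_mul_self hρ
  set Q : Matrix (Fin n) (Fin n) ℂ := 1 - P with hQdef
  have hQH : Qᴴ = Q := by
    rw [hQdef, conjTranspose_sub, conjTranspose_one, hP.eq]
  have hQ2 : Q * Q = Q := by
    rw [hQdef]
    calc (1 - P) * (1 - P) = 1 - P - P + P * P := by noncomm_ring
      _ = 1 - P := by rw [hP2]; abel
  set A : Matrix (Fin n) (Fin n) ℂ := P * s with hA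
  set B : Matrix (Fin n) (Fin n) ℂ := s * Q with hB
  set c : Matrix (Fin n) (Fin n) ℂ := P * ρ * Q with hc
  have hcAB : c = A * B := by rw [hc, hA, hB, ← hss]; noncomm_ring
  rw [traceNorm_eq_sum_sqrt c]
  set hH : (c * cᴴ).IsHermitian := (Matrix.posSemidef_self_mul_conjTranspose c).1 with hHdef
  have hM : (c * cᴴ).PosSemidef := Matrix.posSemidef_self_mul_conjTranspose c
  set d : Fin n → ℝ := hH.eigenvalues with hd
  have hdnn : ∀ i, 0 ≤ d i := hM.eigenvalues_nonneg
  set u : Fin n → Fin n → ℂ := fun i => ⇑(hH.eigenvectorBasis i) with hu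
  have hMu : ∀ i, (c * cᴴ) *ᵥ u i = d i • u i := fun i => hH.mulVec_eigenvectorBasis i
  have huu : ∀ i j, star (u i) ⬝ᵥ u j = if i = j then 1 else 0 := by
    intro i j
    have h := (orthonormal_iff_ite.mp hH.eigenvectorBasis.orthonormal) i j
    rw [EuclideanSpace.inner_eq_star_dotProduct, dotProduct_comm] at h
    exact h
  have hucol : ∀ i, u i = fun j => (hH.eigenvectorUnitary : Matrix (Fin n) (Fin n) ℂ) j i :=
    fun i => rfl
  set w : Fin n → Fin n → ℂ := fun i => cᴴ *ᵥ u i with hw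
  have hcw : ∀ i, c *ᵥ w i = d i • u i := by
    intro i
    rw [hw]
    simp only []
    rw [Matrix.mulVec_mulVec, hMu i]
  have hww : ∀ i j, star (w i) ⬝ᵥ w j = if i = j then (d i : ℂ) else 0 := by
    intro i j
    rw [hw]
    simp only []
    rw [star_mulVec, conjTranspose_conjTranspose, ← dotProduct_mulVec, hcw j,
      dotProduct_smul, huu i j]
    split
    · next hij => subst hij; simp [Complex.real_smul]
    · simp
  have hw0 : ∀ i, d i = 0 → w i = 0 := by
    intro i h0
    have h := hww i i
    rw [if_pos rfl, h0] at h
    exact dotProduct_star_self_eq_zero.mp (by simpa using h)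
  set a : Fin n → Fin n → ℂ := fun i => Aᴴ *ᵥ u i with ha
  set v : Fin n → Fin n → ℂ := fun i => (((Real.sqrt (d i) : ℝ) : ℂ))⁻¹ • w i with hv
  set b : Fin n → Fin n → ℂ := fun i => B *ᵥ v i with hb
  -- key per-index identity
  have hab : ∀ i, star (a i) ⬝ᵥ b i = ((Real.sqrt (d i) : ℝ) : ℂ) := by
    intro i
    have h1 : star (a i) ⬝ᵥ (B *ᵥ w i) = (d i : ℂ) := by
      rw [ha]
      simp only []
      rw [star_mulVec, conjTranspose_conjTranspose, ← dotProduct_mulVec,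
        Matrix.mulVec_mulVec, ← hcAB, hcw i, dotProduct_smul, huu i i, if_pos rfl]
      simp [Complex.real_smul]
    have h2 : star (a i) ⬝ᵥ b i = (((Real.sqrt (d i) : ℝ) : ℂ))⁻¹ * (d i : ℂ) := by
      rw [hb]
      simp only [hv]
      rw [mulVec_smul, dotProduct_smul, h1, smul_eq_mul]
    rw [h2]
    rcases eq_or_ne (d i) 0 with h0 | h0
    · simp [h0]
    · have hpos : 0 < d i := lt_of_le_of_ne (hdnn i) (Ne.symm h0)
      have hsq : Real.sqrt (d i) * Real.sqrt (d i) = d i := Real.mul_self_sqrt (hdnn i)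
      have hs0 : (((Real.sqrt (d i) : ℝ)) : ℂ) ≠ 0 := by
        simpa using (Real.sqrt_ne_zero'.mpr hpos)
      rw [show ((d i : ℝ) : ℂ) = ((Real.sqrt (d i) : ℝ) : ℂ) * ((Real.sqrt (d i) : ℝ) : ℂ) by
        exact_mod_cast hsq.symm]
      rw [← mul_assoc, inv_mul_cancel₀ hs0, one_mul]
  set x : Fin n → ℝ := fun i => Real.sqrt ((star (a i) ⬝ᵥ a i).re) with hx
  set y : Fin n → ℝ := fun i => Real.sqrt ((star (b i) ⬝ᵥ b i).re) with hy
  have step1 : ∀ i, Real.sqrt (d i) ≤ x i * y i := by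
    intro i
    calc Real.sqrt (d i) = (star (a i) ⬝ᵥ b i).re := by rw [hab i, Complex.ofReal_re]
      _ ≤ x i * y i := re_dot_le _ _
  have hx2 : ∀ i, x i ^ 2 = (star (a i) ⬝ᵥ a i).re :=
    fun i => Real.sq_sqrt (re_dot_self_nonneg _)
  have hy2 : ∀ i, y i ^ 2 = (star (b i) ⬝ᵥ b i).re :=
    fun i => Real.sq_sqrt (re_dot_self_nonneg _)
  -- the a-side sum
  have hsa : ∑ i, (star (a i) ⬝ᵥ a i) = (A * Aᴴ).trace := by
    have h1 : ∀ i, star (a i) ⬝ᵥ a i = star (u i) ⬝ᵥ ((A * Aᴴ) *ᵥ u i) := by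
      intro i
      rw [ha]
      simp only []
      rw [star_mulVec, conjTranspose_conjTranspose, ← dotProduct_mulVec, Matrix.mulVec_mulVec]
    calc ∑ i, (star (a i) ⬝ᵥ a i)
        = ∑ i, star (fun j => (hH.eigenvectorUnitary : Matrix (Fin n) (Fin n) ℂ) j i) ⬝ᵥ
            ((A * Aᴴ) *ᵥ fun j => (hH.eigenvectorUnitary : Matrix (Fin n) (Fin n) ℂ) j i) := by
          refine Finset.sum_congr rfl fun i _ => ?_
          rw [h1 i, hucol i]
      _ = (A * Aᴴ).trace := sum_dot_eq_trace _ _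
    -- the b-side sum, via Bessel's inequality
  set g : Fin n → EuclideanSpace ℂ (Fin n) :=
    fun j => (WithLp.equiv 2 _).symm (star (fun k => B j k)) with hg
  have hgv : ∀ i j, (b i) j = (inner ℂ (g j) ((WithLp.equiv 2 _).symm (v i)) : ℂ) := by
    intro i j
    rw [hg]
    simp only []
    rw [inner_equiv_symm', star_star]
    rfl
  have hgnorm : ∀ j, ‖g j‖ ^ 2 = ∑ k, ‖B j k‖ ^ 2 := by
    intro j
    rw [norm_sq_eq_re_inner (𝕜 := ℂ), hg]
    simp only []
    rw [inner_equiv_symm']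
    rw [show (RCLike.re (star (star fun k => B j k) ⬝ᵥ (star fun k => B j k)) : ℝ)
        = ((star (star fun k => B j k) ⬝ᵥ (star fun k => B j k)) : ℂ).re from rfl]
    rw [re_dot_self_eq_sum]
    simp
  have htrB : ((Bᴴ * B).trace).re = ∑ j, ‖g j‖ ^ 2 := by
    have h1 : (Bᴴ * B).trace = ∑ k, ∑ j, star (B j k) * B j k := by
      simp [Matrix.trace, Matrix.diag, Matrix.mul_apply, Matrix.conjTranspose_apply]
    rw [h1, Complex.re_sum]
    simp only [Complex.re_sum]
    rw [Finset.sum_comm]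
    refine Finset.sum_congr rfl fun j _ => ?_
    rw [hgnorm j]
    refine Finset.sum_congr rfl fun k _ => ?_
    simp [Complex.sq_norm, Complex.normSq_apply, Complex.mul_re]
  have hvv : ∀ i j,
      (inner ℂ ((WithLp.equiv 2 _).symm (v i)) ((WithLp.equiv 2 _).symm (v j)) : ℂ)
      = if i = j then (if d i = 0 then 0 else 1) else 0 := by
    intro i j
    rw [inner_equiv_symm', hv]
    simp only []
    rw [star_smul, smul_dotProduct, dotProduct_smul, hww i j]
    rcases eq_or_ne i j with rfl | hij
    · rcases eq_or_ne (d i) 0 with h0 | h0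
      · simp [h0]
      · have hpos : 0 < d i := lt_of_le_of_ne (hdnn i) (Ne.symm h0)
        have hs0 : ((Real.sqrt (d i) : ℝ) : ℂ) ≠ 0 := by
          simpa using Real.sqrt_ne_zero'.mpr hpos
        have hsq : Real.sqrt (d i) * Real.sqrt (d i) = d i := Real.mul_self_sqrt (hdnn i)
        simp only [if_pos rfl, if_neg h0, RCLike.star_def, map_inv₀, Complex.conj_ofReal,
          smul_eq_mul]
        field_simp
        simp only [↓reduceIte]
        norm_num
        exact_mod_cast (Real.sq_sqrt (hdnn i)).symm
    · simp [hij]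
  have horth : Orthonormal ℂ (fun t : {i // d i ≠ 0} => (WithLp.equiv 2 _).symm (v t.1)) := by
    rw [orthonormal_iff_ite]
    intro t t'
    rw [hvv t.1 t'.1]
    rcases eq_or_ne t t' with rfl | h
    · simp [t.2]
    · have h1 : t.1 ≠ t'.1 := fun h' => h (Subtype.ext h')
      simp [h1, h]
  have hbsum : ∑ i, (star (b i) ⬝ᵥ b i).re ≤ ((Bᴴ * B).trace).re := by
    have key : ∀ j, ∑ i, ‖(inner ℂ (g j) ((WithLp.equiv 2 _).symm (v i)) : ℂ)‖ ^ 2 ≤ ‖g j‖ ^ 2 := by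
      intro j
      have hzero : ∀ i ∈ Finset.univ,
          ‖(inner ℂ (g j) ((WithLp.equiv 2 _).symm (v i)) : ℂ)‖ ^ 2 ≠ 0 → d i ≠ 0 := by
        intro i _ hne h0
        apply hne
        have hv0 : v i = 0 := by rw [hv]; simp [hw0 i h0]
        rw [hv0]
        simp
      calc ∑ i, ‖(inner ℂ (g j) ((WithLp.equiv 2 _).symm (v i)) : ℂ)‖ ^ 2
          = ∑ i ∈ Finset.univ.filter (fun i => d i ≠ 0),
              ‖(inner ℂ (g j) ((WithLp.equiv 2 _).symm (v i)) : ℂ)‖ ^ 2 :=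
            (Finset.sum_filter_of_ne hzero).symm
        _ = ∑ t : {i // d i ≠ 0}, ‖(inner ℂ (g j) ((WithLp.equiv 2 _).symm (v t.1)) : ℂ)‖ ^ 2 := by
            rw [Finset.sum_subtype]
            intro x; simp
        _ = ∑ t : {i // d i ≠ 0}, ‖(inner ℂ ((WithLp.equiv 2 _).symm (v t.1)) (g j) : ℂ)‖ ^ 2 :=
            Finset.sum_congr rfl fun t _ => by rw [norm_inner_symm]
        _ ≤ ‖g j‖ ^ 2 := horth.sum_inner_products_le (g j)
    calc ∑ i, (star (b i) ⬝ᵥ b i).re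
        = ∑ i, ∑ j, ‖(inner ℂ (g j) ((WithLp.equiv 2 _).symm (v i)) : ℂ)‖ ^ 2 := by
          refine Finset.sum_congr rfl fun i _ => ?_
          rw [re_dot_self_eq_sum]
          exact Finset.sum_congr rfl fun j _ => by rw [hgv i j]
      _ = ∑ j, ∑ i, ‖(inner ℂ (g j) ((WithLp.equiv 2 _).symm (v i)) : ℂ)‖ ^ 2 := Finset.sum_comm
      _ ≤ ∑ j, ‖g j‖ ^ 2 := Finset.sum_le_sum fun j _ => key j
      _ = ((Bᴴ * B).trace).re := htrB.symm
  -- trace identities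
  have hAH : Aᴴ = s * P := by rw [hA, conjTranspose_mul, hsH, hP.eq]
  have hBH : Bᴴ = Q * s := by rw [hB, conjTranspose_mul, hsH, hQH]
  have htrA : (A * Aᴴ).trace = (P * ρ).trace := by
    rw [hAH, hA]
    have h1 : P * s * (s * P) = P * ρ * P := by rw [← hss]; noncomm_ring
    rw [h1, Matrix.trace_mul_cycle, hP2]
  have htrBQ : (Bᴴ * B).trace = (Q * ρ).trace := by
    rw [hBH, hB]
    have h1 : Q * s * (s * Q) = Q * ρ * Q := by rw [← hss]; noncomm_ring
    rw [h1, Matrix.trace_mul_cycle, hQ2]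
  have hPQtr : (P * ρ).trace = 1 - (Q * ρ).trace := by
    have h1 : Q * ρ = ρ - P * ρ := by rw [hQdef]; noncomm_ring
    rw [h1, Matrix.trace_sub, hρtr]; ring
  set ε : ℝ := ((Q * ρ).trace).re with hε
  have hSa : ∑ i, x i ^ 2 = 1 - ε := by
    calc ∑ i, x i ^ 2 = ∑ i, (star (a i) ⬝ᵥ a i).re :=
          Finset.sum_congr rfl fun i _ => hx2 i
      _ = ((A * Aᴴ).trace).re := by rw [← hsa, Complex.re_sum]
      _ = 1 - ε := by rw [htrA, hPQtr, Complex.sub_re, Complex.one_re]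
  have hSb : ∑ i, y i ^ 2 ≤ ε := by
    calc ∑ i, y i ^ 2 = ∑ i, (star (b i) ⬝ᵥ b i).re :=
          Finset.sum_congr rfl fun i _ => hy2 i
      _ ≤ ((Bᴴ * B).trace).re := hbsum
      _ = ε := by rw [htrBQ]
  have hSann : 0 ≤ 1 - ε := hSa ▸ Finset.sum_nonneg fun i _ => sq_nonneg _
  calc ∑ i, Real.sqrt (d i) ≤ ∑ i, x i * y i := Finset.sum_le_sum fun i _ => step1 i
    _ ≤ Real.sqrt (∑ i, x i ^ 2) * Real.sqrt (∑ i, y i ^ 2) :=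
        Real.sum_mul_le_sqrt_mul_sqrt _ _ _
    _ ≤ Real.sqrt (1 - ε) * Real.sqrt ε := by
        rw [hSa]
        exact mul_le_mul_of_nonneg_left (Real.sqrt_le_sqrt hSb) (Real.sqrt_nonneg _)
    _ = Real.sqrt (ε * (1 - ε)) := by rw [← Real.sqrt_mul hSann, mul_comm]
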